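/- arXiv:1009.0782 — 5 statements merged into one kernel-verified Lean document; each statement's English description precedes it below -/
import Mathlib

section
/- Let d ≥ 1 and A, B real numbers with A ≥ |B| and A + (d+1)B ≥ 0. Define E = d^{-1}(−√(A+B) + √(A+(d+1)B)), F = (√(A+B)+√(A−B))/2, G = (√(A+B)−√(A−B))/2. Then for all indices i,j,k,l ∈ {1,…,d}, A·δ^{ik}δ_{jl} + B(δ^i_j δ^k_l + δ^i_l δ^k_j) = Σ_{m,n=1}^d (Eδ^i_j δ^m_n + Fδ^{im}δ_{jn} + Gδ^i_n δ_j^m)(Eδ^k_l δ^m_n + Fδ^{km}δ_{ln} + Gδ^k_n δ_l^m). -/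
open Finset

lemma cov_sum_aux (d : ℕ) (E F G : ℝ) (i j k l : Fin d) :
    ∑ m : Fin d, ∑ n : Fin d,
          (E * (if i=j then (1:ℝ) else 0) * (if m=n then (1:ℝ) else 0) + F * (if i=m then (1:ℝ) else 0) * (if j=n then (1:ℝ) else 0) + G * (if i=n then (1:ℝ) else 0) * (if j=m then (1:ℝ) else 0)) *
          (E * (if k=l then (1:ℝ) else 0) * (if m=n then (1:ℝ) else 0) + F * (if k=m then (1:ℝ) else 0) * (if l=n then (1:ℝ) else 0) + G * (if k=n then (1:ℝ) else 0) * (if l=m then (1:ℝ) else 0))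
    = ((d:ℝ)*E^2 + 2*E*F + 2*E*G) * (if i=j then (1:ℝ) else 0) * (if k=l then (1:ℝ) else 0)
      + (F^2+G^2) * (if i=k then (1:ℝ) else 0) * (if j=l then (1:ℝ) else 0)
      + 2*F*G * (if i=l then (1:ℝ) else 0) * (if j=k then (1:ℝ) else 0) := by
  simp only [add_mul, mul_add, Finset.sum_add_distrib, mul_ite, ite_mul, mul_one, mul_zero,
    one_mul, zero_mul, Finset.sum_ite_eq, Finset.sum_ite_eq', Finset.mem_univ, if_true,
    Finset.sum_const, card_univ, Fintype.card_fin, smul_eq_mul, Finset.sum_ite_irrel,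
    Finset.sum_const_zero, smul_zero, nsmul_eq_mul]
  split_ifs <;> simp_all <;> ring

/-- decomposition of the isotropic covariance tensor
`D^{ik}_{jl} = A δ^{ik} δ_{jl} + B (δ^i_j δ^k_l + δ^i_l δ^k_j)` as a sum of squares. -/
theorem covariance_decomposition (d : ℕ) (hd : 1 ≤ d) (A B : ℝ)
    (hAB : |B| ≤ A) (hAB2 : 0 ≤ A + (d + 1) * B)
    (E F G : ℝ)
    (hE : E = (d : ℝ)⁻¹ * (-Real.sqrt (A + B) + Real.sqrt (A + (d + 1) * B)))
    (hF : F = (Real.sqrt (A + B) + Real.sqrt (A - B)) / 2)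
    (hG : G = (Real.sqrt (A + B) - Real.sqrt (A - B)) / 2)
    (δ : Fin d → Fin d → ℝ) (hδ : ∀ a b, δ a b = if a = b then 1 else 0)
    (i j k l : Fin d) :
    A * δ i k * δ j l + B * (δ i j * δ k l + δ i l * δ k j)
      = ∑ m : Fin d, ∑ n : Fin d,
          (E * δ i j * δ m n + F * δ i m * δ j n + G * δ i n * δ j m) *
          (E * δ k l * δ m n + F * δ k m * δ l n + G * δ k n * δ l m) := by
  have hdR : (0:ℝ) < (d:ℝ) := by exact_mod_cast hd
  have hY : 0 ≤ A + B := by linarith [abs_le.mp hAB |>.1, abs_le.mp hAB |>.2]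
  have hZ : 0 ≤ A - B := by linarith [abs_le.mp hAB |>.2]
  have hp : Real.sqrt (A + B) ^ 2 = A + B := Real.sq_sqrt hY
  have hq : Real.sqrt (A - B) ^ 2 = A - B := Real.sq_sqrt hZ
  have hr : Real.sqrt (A + (d + 1) * B) ^ 2 = A + (d + 1) * B := Real.sq_sqrt hAB2
  have hFG1 : F ^ 2 + G ^ 2 = A := by rw [hF, hG]; nlinarith [hp, hq]
  have hFG2 : 2 * F * G = B := by rw [hF, hG]; nlinarith [hp, hq]
  have hFGp : F + G = Real.sqrt (A + B) := by rw [hF, hG]; ring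
  have hdE : (d : ℝ) * E = -Real.sqrt (A + B) + Real.sqrt (A + (d + 1) * B) := by
    rw [hE]; field_simp
  have h2 : (d:ℝ) * ((d:ℝ) * E ^ 2 + 2 * E * F + 2 * E * G) = (d:ℝ) * B := by
    have h3 : (d:ℝ) * ((d:ℝ) * E ^ 2 + 2 * E * F + 2 * E * G)
        = ((d:ℝ) * E) ^ 2 + 2 * ((d:ℝ) * E) * (F + G) := by ring
    rw [h3, hdE, hFGp]
    linear_combination hr - hp
  have hE1 : (d : ℝ) * E ^ 2 + 2 * E * F + 2 * E * G = B :=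
    mul_left_cancel₀ (ne_of_gt hdR) h2
  simp only [hδ]
  rw [cov_sum_aux d E F G i j k l, hE1, hFG1, hFG2]
  have hkj : (if k = j then (1:ℝ) else 0) = (if j = k then (1:ℝ) else 0) := by
    simp [eq_comm]
  rw [hkj]; ring
end

section
/- Fix d ≥ 1, real constants E, F, G with F > 0 and E + F + G > 0. For (ρ, χ) ∈ ℝ^d × ℝ^d, define for each m,n ∈ {1,…,d} the vectors in ℝ^{2d}: X^m_n(ρ,χ) whose ρ-component is 0 and whose χ-component has i-th entry Σ_j ρ^j(Eδ^i_j δ^m_n + Fδ^{im}δ_{jn} + Gδ^i_n δ_j^m); Y^m_n(ρ,χ) whose ρ-component has i-th entry −Σ_j ρ^j(Eδ^i_j δ^m_n + Fδ^{im}δ_{jn} + Gδ^i_n δ_j^m) and whose χ-component has i-th entry Σ_j (χ^j+ρ^j)(Eδ^i_j δ^m_n + Fδ^{im}δ_{jn} + Gδ^i_n δ_j^m); and Z^m_n(ρ,χ) whose ρ-component has i-th entry −Σ_j (2χ^j+ρ^j)(same coefficient) and whose χ-component has i-th entry Σ_j (χ^j+ρ^j)(same coefficient). Then for every (ρ,χ)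 ≠ (0,0), the collection {X^m_n(ρ,χ), Y^m_n(ρ,χ), Z^m_n(ρ,χ) : m,n = 1,…,d} spans ℝ^{2d}. -/
open Finset

/-- Kronecker delta on `Fin d`. -/
def kd {d : ℕ} (a b : Fin d) : ℝ := if a = b then 1 else 0

/-- Coefficient `σ^i_j(m,n) = E δ^i_j δ^m_n + F δ^{im} δ_{jn} + G δ^i_n δ_j^m`. -/
def sigmaCoeff (E F G : ℝ) {d : ℕ} (m n i j : Fin d) : ℝ :=
  E * kd i j * kd m n + F * kd i m * kd j n + G * kd i n * kd j m

/-- The vector field `X^m_n`. -/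
def Xmn (E F G : ℝ) {d : ℕ} (m n : Fin d)
    (p : (Fin d → ℝ) × (Fin d → ℝ)) : (Fin d → ℝ) × (Fin d → ℝ) :=
  (0, fun i => ∑ j, p.1 j * sigmaCoeff E F G m n i j)

/-- The vector field `Y^m_n = τ [X₀, X^m_n]`. -/
def Ymn (E F G : ℝ) {d : ℕ} (m n : Fin d)
    (p : (Fin d → ℝ) × (Fin d → ℝ)) : (Fin d → ℝ) × (Fin d → ℝ) :=
  (fun i => -∑ j, p.1 j * sigmaCoeff E F G m n i j,
   fun i => ∑ j, (p.2 j + p.1 j) * sigmaCoeff E F G m n i j)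

/-- The vector field `Z^m_n = τ [X₀, Y^m_n]`. -/
def Zmn (E F G : ℝ) {d : ℕ} (m n : Fin d)
    (p : (Fin d → ℝ) × (Fin d → ℝ)) : (Fin d → ℝ) × (Fin d → ℝ) :=
  (fun i => -∑ j, (2 * p.2 j + p.1 j) * sigmaCoeff E F G m n i j,
   fun i => ∑ j, (p.2 j + p.1 j) * sigmaCoeff E F G m n i j)

/-- Collapsing the `j`-sum against the Kronecker deltas. -/
lemma sum_sigma (E F G : ℝ) {d : ℕ} (w : Fin d → ℝ) (m n i : Fin d) :
    ∑ j, w j * sigmaCoeff E F G m n i j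
      = E * kd m n * w i + F * kd i m * w n + G * kd i n * w m := by
  simp only [sigmaCoeff, kd, mul_add, Finset.sum_add_distrib, mul_ite, ite_mul,
    mul_one, mul_zero, zero_mul, one_mul, Finset.sum_ite_eq, Finset.sum_ite_eq',
    Finset.mem_univ, if_true]
  split_ifs <;> simp [Finset.sum_ite_eq] <;> ring

/-- The closed-form vector `A(v)(m,n)`. -/
def Av (E F G : ℝ) {d : ℕ} (v : Fin d → ℝ) (m n : Fin d) : Fin d → ℝ :=
  fun i => E * kd m n * v i + F * kd i m * v n + G * kd i n * v m

/-- The key non-degeneracy lemma: for any nonzero `v`, the vectors `A(v)(m,n)`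
span all of `ℝ^d`. -/
lemma key_span {d : ℕ} (E F G : ℝ) (hF : 0 < F) (hEFG : 0 < E + F + G)
    (v : Fin d → ℝ) (hv : v ≠ 0) (M : Submodule ℝ (Fin d → ℝ))
    (hmem : ∀ m n, Av E F G v m n ∈ M) : M = ⊤ := by
  set Q : ℝ := ∑ j, v j * v j with hQdef
  have hQ : 0 < Q := by
    obtain ⟨k, hk⟩ := Function.ne_iff.mp hv
    exact Finset.sum_pos' (fun i _ => mul_self_nonneg _)
      ⟨k, Finset.mem_univ k, mul_self_pos.mpr hk⟩
  have hB : ∀ m, (fun i => (E + G) * (v m * v i)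
      + (F * Q) * (if i = m then 1 else 0)) ∈ M := by
    intro m
    have h : (∑ n, v n • Av E F G v m n) ∈ M :=
      M.sum_mem (fun n _ => M.smul_mem (v n) (hmem m n))
    have heq : (∑ n, v n • Av E F G v m n)
        = fun i => (E + G) * (v m * v i) + (F * Q) * (if i = m then 1 else 0) := by
      funext i
      rw [Finset.sum_apply]
      simp only [Av, kd, Pi.smul_apply, smul_eq_mul, mul_add, mul_ite, ite_mul,
        mul_one, mul_zero, zero_mul, one_mul, Finset.sum_add_distrib,
        Finset.sum_ite_eq, Finset.sum_ite_eq', Finset.mem_univ, if_true]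
      have hs : ∑ x, v x * (F * v x) = F * Q := by
        rw [hQdef, Finset.mul_sum]; exact Finset.sum_congr rfl fun x _ => by ring
      split_ifs with h
      · rw [hs]; ring
      · simp; ring
    rwa [heq] at h
  have hvM : v ∈ M := by
    have h : (∑ m, v m • (fun i => (E + G) * (v m * v i)
        + (F * Q) * (if i = m then 1 else 0))) ∈ M :=
      M.sum_mem (fun m _ => M.smul_mem (v m) (hB m))
    have heq : (∑ m, v m • (fun i => (E + G) * (v m * v i)
        + (F * Q) * (if i = m then 1 else 0))) = ((E + F + G) * Q) • v := by
      funext i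
      rw [Finset.sum_apply]
      simp only [Pi.smul_apply, smul_eq_mul, mul_add, mul_ite, mul_one, mul_zero,
        Finset.sum_add_distrib, Finset.sum_ite_eq', Finset.mem_univ, if_true]
      have h1 : ∑ m, v m * ((E + G) * (v m * v i)) = (E + G) * Q * v i := by
        rw [hQdef, Finset.mul_sum, Finset.sum_mul]
        exact Finset.sum_congr rfl fun m _ => by ring
      rw [h1, Finset.sum_ite_eq]; simp; ring
    rw [heq] at h
    have := M.smul_mem (((E + F + G) * Q)⁻¹) h
    rwa [smul_smul, inv_mul_cancel₀ (by positivity), one_smul] at this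
  have hsingle : ∀ m, (Pi.single m 1 : Fin d → ℝ) ∈ M := by
    intro m
    have h : ((fun i => (E + G) * (v m * v i) + (F * Q) * (if i = m then 1 else 0))
        - ((E + G) * v m) • v) ∈ M := M.sub_mem (hB m) (M.smul_mem _ hvM)
    have heq : ((fun i => (E + G) * (v m * v i) + (F * Q) * (if i = m then 1 else 0))
        - ((E + G) * v m) • v) = (F * Q) • (Pi.single m 1 : Fin d → ℝ) := by
      funext i
      simp only [Pi.sub_apply, Pi.smul_apply, smul_eq_mul, Pi.single_apply]
      split_ifs <;> ring
    rw [heq] at h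
    have := M.smul_mem ((F * Q)⁻¹) h
    rwa [smul_smul, inv_mul_cancel₀ (by positivity), one_smul] at this
  rw [Submodule.eq_top_iff']
  intro u
  have hu : u = ∑ m, u m • (Pi.single m 1 : Fin d → ℝ) := by
    funext i
    rw [Finset.sum_apply]
    simp [Pi.single_apply, Finset.sum_ite_eq', mul_ite]
  rw [hu]
  exact M.sum_mem fun m _ => M.smul_mem _ (hsingle m)

/-- at every nonzero point `(ρ,χ)`, the vectors
`X^m_n, Y^m_n, Z^m_n` span all of `ℝ^{2d}`. -/
theorem vector_fields_span (d : ℕ) (hd : 1 ≤ d) (E F G : ℝ)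
    (hF : 0 < F) (hEFG : 0 < E + F + G)
    (p : (Fin d → ℝ) × (Fin d → ℝ)) (hp : p ≠ 0) :
    Submodule.span ℝ
      {v : (Fin d → ℝ) × (Fin d → ℝ) |
        ∃ m n : Fin d,
          v = Xmn E F G m n p ∨ v = Ymn E F G m n p ∨ v = Zmn E F G m n p}
      = ⊤ := by
  set S : Set ((Fin d → ℝ) × (Fin d → ℝ)) :=
    {v | ∃ m n : Fin d,
      v = Xmn E F G m n p ∨ v = Ymn E F G m n p ∨ v = Zmn E F G m n p} with hS
  set sp := Submodule.span ℝ S with hsp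
  have hX : ∀ m n, Xmn E F G m n p ∈ sp :=
    fun m n => Submodule.subset_span ⟨m, n, Or.inl rfl⟩
  have hY : ∀ m n, Ymn E F G m n p ∈ sp :=
    fun m n => Submodule.subset_span ⟨m, n, Or.inr (Or.inl rfl)⟩
  have hZ : ∀ m n, Zmn E F G m n p ∈ sp :=
    fun m n => Submodule.subset_span ⟨m, n, Or.inr (Or.inr rfl)⟩
  -- X gives the second-component vectors A(ρ)
  have hXA : ∀ m n, ((0 : Fin d → ℝ), Av E F G p.1 m n) ∈ sp := by
    intro m n
    have e : Xmn E F G m n p = ((0 : Fin d → ℝ), Av E F G p.1 m n) := by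
      refine Prod.ext rfl ?_
      funext i
      simp only [Xmn, Av, sum_sigma]
    rw [← e]; exact hX m n
  -- Y - Z gives the first-component vectors A(2χ)
  have hYZ : ∀ m n, (Av E F G (fun j => 2 * p.2 j) m n, (0 : Fin d → ℝ)) ∈ sp := by
    intro m n
    have e : Ymn E F G m n p - Zmn E F G m n p
        = (Av E F G (fun j => 2 * p.2 j) m n, (0 : Fin d → ℝ)) := by
      refine Prod.ext ?_ ?_
      · funext i
        simp only [Ymn, Zmn, Prod.fst_sub, Pi.sub_apply, Av, sum_sigma]
        ring
      · funext i
        simp only [Ymn, Zmn, Prod.snd_sub, Pi.sub_apply, Pi.zero_apply, sum_sigma]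
        ring
    rw [← e]; exact sp.sub_mem (hY m n) (hZ m n)
  -- the final glue
  have glue : (∀ u : Fin d → ℝ, (u, (0 : Fin d → ℝ)) ∈ sp) →
      (∀ w : Fin d → ℝ, ((0 : Fin d → ℝ), w) ∈ sp) → sp = ⊤ := by
    intro h1 h2
    rw [Submodule.eq_top_iff']
    intro x
    have := sp.add_mem (h1 x.1) (h2 x.2)
    simpa using this
  -- first factor from a nonzero vector w with all (Av w m n, 0) ∈ sp
  have first : ∀ w : Fin d → ℝ, w ≠ 0 →
      (∀ m n, (Av E F G w m n, (0 : Fin d → ℝ)) ∈ sp) →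
      ∀ u : Fin d → ℝ, (u, (0 : Fin d → ℝ)) ∈ sp := by
    intro w hw hmem u
    have htop := key_span E F G hF hEFG w hw
      (sp.comap (LinearMap.inl ℝ (Fin d → ℝ) (Fin d → ℝ)))
      (fun m n => by simpa [Submodule.mem_comap] using hmem m n)
    have : u ∈ sp.comap (LinearMap.inl ℝ (Fin d → ℝ) (Fin d → ℝ)) := by
      rw [htop]; trivial
    simpa [Submodule.mem_comap] using this
  have second : ∀ w : Fin d → ℝ, w ≠ 0 →
      (∀ m n, ((0 : Fin d → ℝ), Av E F G w m n) ∈ sp) →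
      ∀ u : Fin d → ℝ, ((0 : Fin d → ℝ), u) ∈ sp := by
    intro w hw hmem u
    have htop := key_span E F G hF hEFG w hw
      (sp.comap (LinearMap.inr ℝ (Fin d → ℝ) (Fin d → ℝ)))
      (fun m n => by simpa [Submodule.mem_comap] using hmem m n)
    have : u ∈ sp.comap (LinearMap.inr ℝ (Fin d → ℝ) (Fin d → ℝ)) := by
      rw [htop]; trivial
    simpa [Submodule.mem_comap] using this
  by_cases hχ : p.2 = 0
  · -- here ρ ≠ 0
    have hρ : p.1 ≠ 0 := by
      intro h; exact hp (Prod.ext h hχ)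
    -- X - Y = (A(ρ), 0) since χ = 0
    have hXY : ∀ m n, (Av E F G p.1 m n, (0 : Fin d → ℝ)) ∈ sp := by
      intro m n
      have e : Xmn E F G m n p - Ymn E F G m n p
          = (Av E F G p.1 m n, (0 : Fin d → ℝ)) := by
        refine Prod.ext ?_ ?_
        · funext i
          simp only [Xmn, Ymn, Prod.fst_sub, Pi.sub_apply, Pi.zero_apply, Av,
            sum_sigma]
          ring
        · funext i
          simp only [Xmn, Ymn, Prod.snd_sub, Pi.sub_apply, Pi.zero_apply, hχ,
            zero_add, sum_sigma]
          ring
      rw [← e]; exact sp.sub_mem (hX m n) (hY m n)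
    exact glue (first p.1 hρ hXY) (second p.1 hρ hXA)
  · -- here χ ≠ 0
    have h2χ : (fun j => 2 * p.2 j) ≠ 0 := by
      intro h
      apply hχ
      funext j
      have := congrFun h j
      simpa using this
    have h1 := first _ h2χ hYZ
    -- now (0, A(χ+ρ)) = Y + (A(ρ), 0), and subtracting (0, A(ρ)) gives (0, A(χ))
    have hχA : ∀ m n, ((0 : Fin d → ℝ), Av E F G p.2 m n) ∈ sp := by
      intro m n
      have e : Ymn E F G m n p + (Av E F G p.1 m n, (0 : Fin d → ℝ))
          - ((0 : Fin d → ℝ), Av E F G p.1 m n)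
          = ((0 : Fin d → ℝ), Av E F G p.2 m n) := by
        refine Prod.ext ?_ ?_
        · funext i
          simp only [Ymn, Prod.fst_sub, Prod.fst_add, Pi.sub_apply, Pi.add_apply,
            Pi.zero_apply, Av, sum_sigma]
          ring
        · funext i
          simp only [Ymn, Prod.snd_sub, Prod.snd_add, Pi.sub_apply, Pi.add_apply,
            Pi.zero_apply, Av, sum_sigma]
          ring
      rw [← e]
      exact sp.sub_mem (sp.add_mem (hY m n) (h1 _)) (hXA m n)
    exact glue h1 (second p.2 hχ hχA)
end

section
/- Fix d ≥ 1, constants E, F, G with F > 0 and E+F+G > 0, and χ ∈ ℝ^d with χ ≠ 0. For any φ ∈ ℝ^d, setting α = −((E+G)/((E+F+G)F))·(χ·φ)/|χ|⁴ and β = 1/(F|χ|²), one has Σ_{m,n} (α χ^n χ^m + β χ^n φ^m) · v^{mn} = φ, where v^{mn} ∈ ℝ^d has i-th entry Σ_j χ^j(Eδ^i_j δ^m_n + Fδ^{im}δ_{jn} + Gδ^i_n δ_j^m). -/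
open Finset

/-- the explicit linear combination of the vectors
`v^{mn} = (Σ_j χ^j σ^i_j(m,n))_i` with coefficients `α χ^n χ^m + β χ^n φ^m`
recovers an arbitrary vector `φ`. -/
theorem explicit_combination (d : ℕ) (hd : 1 ≤ d) (E F G : ℝ)
    (hF : 0 < F) (hEFG : 0 < E + F + G)
    (χ φ : Fin d → ℝ) (hχ : χ ≠ 0)
    (α β : ℝ)
    (hα : α = -((E + G) / ((E + F + G) * F)) * (∑ j, χ j * φ j) / (∑ j, χ j ^ 2) ^ 2)
    (hβ : β = 1 / (F * ∑ j, χ j ^ 2)) :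
    ∀ i : Fin d,
      (∑ m, ∑ n, (α * χ n * χ m + β * χ n * φ m) *
        (∑ j, χ j * sigmaCoeff E F G m n i j)) = φ i := by
  intro i
  have hinner : ∀ m n : Fin d, (∑ j, χ j * sigmaCoeff E F G m n i j)
      = E * χ i * kd m n + F * kd i m * χ n + G * kd i n * χ m := by
    intro m n
    simp [sigmaCoeff, kd, mul_ite, ite_mul, mul_add, Finset.sum_add_distrib,
      Finset.sum_ite_eq, Finset.sum_ite_eq']
    split_ifs <;> ring
  simp only [hinner, kd, mul_add, add_mul, mul_ite, ite_mul, mul_zero, zero_mul,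
    mul_one, one_mul, Finset.sum_add_distrib, Finset.sum_ite_eq, Finset.sum_ite_eq',
    Finset.mem_univ, if_true]
  set S := ∑ j : Fin d, χ j ^ 2 with hS
  set P := ∑ j : Fin d, χ j * φ j with hP
  have hS0 : 0 < S := by
    obtain ⟨k, hk⟩ : ∃ k, χ k ≠ 0 := by
      by_contra h; push_neg at h; exact hχ (funext h)
    exact Finset.sum_pos' (fun j _ => sq_nonneg _) ⟨k, Finset.mem_univ k, by positivity⟩
  have e1 : ∑ x : Fin d, α * χ x * χ x * (E * χ i) = α * E * χ i * S := by
    rw [hS, Finset.mul_sum]; exact Finset.sum_congr rfl (fun x _ => by ring)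
  have e2 : ∑ x : Fin d, β * χ x * φ x * (E * χ i) = β * E * χ i * P := by
    rw [hP, Finset.mul_sum]; exact Finset.sum_congr rfl (fun x _ => by ring)
  have e3 : ∑ x : Fin d, ∑ x_1 : Fin d,
      (if i = x then α * χ x_1 * χ x * (F * χ x_1) + β * χ x_1 * φ x * (F * χ x_1) else 0)
      = α * F * χ i * S + β * F * φ i * S := by
    rw [Finset.sum_comm]
    simp only [Finset.sum_ite_eq, Finset.mem_univ, if_true]
    rw [hS, Finset.mul_sum, Finset.mul_sum, ← Finset.sum_add_distrib]
    exact Finset.sum_congr rfl (fun x _ => by ring)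
  have e4 : ∑ x : Fin d, α * χ i * χ x * (G * χ x) = α * G * χ i * S := by
    rw [hS, Finset.mul_sum]; exact Finset.sum_congr rfl (fun x _ => by ring)
  have e5 : ∑ x : Fin d, β * χ i * φ x * (G * χ x) = β * G * χ i * P := by
    rw [hP, Finset.mul_sum]; exact Finset.sum_congr rfl (fun x _ => by ring)
  rw [e1, e2, e3, e4, e5, hα, hβ]
  field_simp
  ring
end

section
/- Let τ > 0 and d ≥ 1. For every T > 0 and every pair of points p₀ = (ρ₀, χ₀) ≠ 0 and p₁ = (ρ₁, χ₁) ≠ 0 in ℝ^{2d}, there exists a piecewise smooth control curve u : [0,T] → ℝ^{d×d} such that the solution of the ODE system ρ̇ = χ/τ, χ̇ = −χ/τ + (Σ_{m,n} u^n_m(t) X^m_n(ρ,χ))_χ-component, with p(0) = p₀, satisfies p(T) = p₁, where X^m_n are as defined via constants E, F, G with F > 0, E+F+G > 0. Moreover the solution p(t) is nonzero for all t ∈ [0,T]. -/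
open Finset

/-- The drift vector field `X₀(ρ,χ) = (χ/τ, −χ/τ)`. -/
noncomputable def X0 (τ : ℝ) {d : ℕ}
    (p : (Fin d → ℝ) × (Fin d → ℝ)) : (Fin d → ℝ) × (Fin d → ℝ) :=
  ((1 / τ) • p.2, -(1 / τ) • p.2)

noncomputable section
open Real

/-- cubic -/
def cub (a b C D x : ℝ) : ℝ := a + b*x + C*x^2 + D*x^3
def cub1 (b C D x : ℝ) : ℝ := b + 2*C*x + 3*D*x^2
def cub2 (C D x : ℝ) : ℝ := 2*C + 6*D*x

lemma cub_hasDerivAt (a b C D x : ℝ) : HasDerivAt (fun x => cub a b C D x) (cub1 b C D x) x := by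
  unfold cub cub1
  have h := (((hasDerivAt_id x).const_mul b).const_add a).add
      (((hasDerivAt_pow 2 x).const_mul C).add ((hasDerivAt_pow 3 x).const_mul D))
  convert h using 1 <;> try rfl
  · funext y; simp; ring
  · push_cast; ring

lemma cub1_hasDerivAt (b C D x : ℝ) : HasDerivAt (fun x => cub1 b C D x) (cub2 C D x) x := by
  unfold cub1 cub2
  have h := (((hasDerivAt_id x).const_mul (2*C)).const_add b).add
      (((hasDerivAt_pow 2 x).const_mul (3*D)))
  convert h using 1 <;> try rfl
  push_cast; ring

lemma cub_contDiff (a b C D : ℝ) : ContDiff ℝ (⊤ : ℕ∞) (fun x => cub a b C D x) := by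
  unfold cub; fun_prop

lemma cub1_contDiff (b C D : ℝ) : ContDiff ℝ (⊤ : ℕ∞) (fun x => cub1 b C D x) := by
  unfold cub1; fun_prop

lemma cub2_contDiff (C D : ℝ) : ContDiff ℝ (⊤ : ℕ∞) (fun x => cub2 C D x) := by
  unfold cub2; fun_prop

/-- Hermite cubic coefficients -/
def hC (L a b c e : ℝ) : ℝ := (3*(c-a) - (2*b+e)*L)/L^2
def hD (L a b c e : ℝ) : ℝ := (-2*(c-a) + (b+e)*L)/L^3

def herm (L a b c e x : ℝ) : ℝ := cub a b (hC L a b c e) (hD L a b c e) x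
def herm1 (L a b c e x : ℝ) : ℝ := cub1 b (hC L a b c e) (hD L a b c e) x
def herm2 (L a b c e x : ℝ) : ℝ := cub2 (hC L a b c e) (hD L a b c e) x

lemma herm_hasDerivAt (L a b c e x : ℝ) :
    HasDerivAt (fun x => herm L a b c e x) (herm1 L a b c e x) x := cub_hasDerivAt ..
lemma herm1_hasDerivAt (L a b c e x : ℝ) :
    HasDerivAt (fun x => herm1 L a b c e x) (herm2 L a b c e x) x := cub1_hasDerivAt ..
lemma herm_contDiff (L a b c e : ℝ) : ContDiff ℝ (⊤ : ℕ∞) (fun x => herm L a b c e x) := cub_contDiff ..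
lemma herm1_contDiff (L a b c e : ℝ) : ContDiff ℝ (⊤ : ℕ∞) (fun x => herm1 L a b c e x) := cub1_contDiff ..
lemma herm2_contDiff (L a b c e : ℝ) : ContDiff ℝ (⊤ : ℕ∞) (fun x => herm2 L a b c e x) := cub2_contDiff ..

lemma herm_zero (L a b c e : ℝ) : herm L a b c e 0 = a := by simp [herm, cub]
lemma herm1_zero (L a b c e : ℝ) : herm1 L a b c e 0 = b := by simp [herm1, cub1]
lemma herm_end (L a b c e : ℝ) (hL : L ≠ 0) : herm L a b c e L = c := by
  unfold herm cub hC hD; field_simp; ring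
lemma herm1_end (L a b c e : ℝ) (hL : L ≠ 0) : herm1 L a b c e L = e := by
  unfold herm1 cub1 hC hD; field_simp; ring

lemma herm_pos (L a c x : ℝ) (hL : 0 < L) (ha : 0 < a) (hc : 0 < c)
    (hx0 : 0 ≤ x) (hxL : x ≤ L) : 0 < herm L a 0 c 0 x := by
  have key : herm L a 0 c 0 x = (a*(L-x)^2*(L+2*x) + c*(x^2*(3*L-2*x)))/L^3 := by
    unfold herm cub hC hD; field_simp; ring
  rw [key]
  apply div_pos _ (by positivity)
  rcases eq_or_lt_of_le hx0 with h|h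
  · rw [← h]; ring_nf; nlinarith [mul_pos ha (pow_pos hL 3)]
  · have h1 : 0 < x^2*(3*L-2*x) := mul_pos (pow_pos h 2) (by linarith)
    nlinarith [mul_nonneg (mul_nonneg ha.le (sq_nonneg (L-x))) (by nlinarith : (0:ℝ) ≤ L+2*x)]

lemma herm1_ge_one (L a c x : ℝ) (hL : 0 < L) (hΔ : L ≤ c - a)
    (hx0 : 0 ≤ x) (hxL : x ≤ L) : 1 ≤ herm1 L a 1 c 1 x := by
  have key : herm1 L a 1 c 1 x = 1 + 6*(c-a-L)*(x*(L-x))/L^3 := by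
    unfold herm1 cub1 hC hD; field_simp; ring
  rw [key]
  have : 0 ≤ 6*(c-a-L)*(x*(L-x))/L^3 := by
    apply div_nonneg _ (by positivity)
    have h2 : 0 ≤ c - a - L := by linarith
    have h3 : 0 ≤ x*(L-x) := by nlinarith
    positivity
  linarith

/-- radius and angle of (a, -b) -/
def rad (a b : ℝ) : ℝ := ‖((a : ℂ) - b * Complex.I)‖
def ang (a b : ℝ) : ℝ := Complex.arg ((a : ℂ) - b * Complex.I)

lemma z_re (a b : ℝ) : ((a : ℂ) - b * Complex.I).re = a := by simp
lemma z_im (a b : ℝ) : ((a : ℂ) - b * Complex.I).im = -b := by simp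

lemma z_ne (a b : ℝ) (h : ¬(a = 0 ∧ b = 0)) : ((a : ℂ) - b * Complex.I) ≠ 0 := by
  intro hz
  exact h ⟨by simpa using congrArg Complex.re hz, by simpa using neg_eq_zero.mp (by simpa using congrArg Complex.im hz)⟩

lemma rad_pos (a b : ℝ) (h : ¬(a = 0 ∧ b = 0)) : 0 < rad a b := by
  simpa [rad] using (norm_pos_iff.mpr (z_ne a b h))

lemma rad_cos (a b : ℝ) (h : ¬(a = 0 ∧ b = 0)) : rad a b * Real.cos (ang a b) = a := by
  have := Complex.cos_arg (z_ne a b h)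
  rw [ang, this, z_re]
  have hne : ‖((a : ℂ) - b * Complex.I)‖ ≠ 0 := by
    simpa [rad] using (rad_pos a b h).ne'
  rw [rad, mul_div_assoc', mul_comm, mul_div_assoc, div_self hne, mul_one]

lemma rad_sin (a b : ℝ) (h : ¬(a = 0 ∧ b = 0)) : rad a b * Real.sin (ang a b) = -b := by
  have := Complex.sin_arg ((a : ℂ) - b * Complex.I)
  rw [ang, this, z_im]
  have hne : ‖((a : ℂ) - b * Complex.I)‖ ≠ 0 := by
    simpa [rad] using (rad_pos a b h).ne'
  rw [rad, mul_div_assoc', mul_comm, mul_div_assoc, div_self hne, mul_one]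

/-- phase product f = A cos θ and its derivatives -/
def ph (A θ : ℝ → ℝ) (t : ℝ) : ℝ := A t * Real.cos (θ t)
def ph1 (A A' θ θ' : ℝ → ℝ) (t : ℝ) : ℝ := A' t * Real.cos (θ t) - A t * Real.sin (θ t) * θ' t
def ph2 (A A' A'' θ θ' θ'' : ℝ → ℝ) (t : ℝ) : ℝ :=
  A'' t * Real.cos (θ t) - 2 * A' t * Real.sin (θ t) * θ' t
    - A t * Real.cos (θ t) * (θ' t)^2 - A t * Real.sin (θ t) * θ'' t

lemma ph_hasDerivAt {A A' θ θ' : ℝ → ℝ} {t : ℝ}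
    (hA : HasDerivAt A (A' t) t) (hθ : HasDerivAt θ (θ' t) t) :
    HasDerivAt (ph A θ) (ph1 A A' θ θ' t) t := by
  have h := hA.mul hθ.cos
  convert h using 1 <;> try rfl
  unfold ph1; ring

lemma ph1_hasDerivAt {A A' A'' θ θ' θ'' : ℝ → ℝ} {t : ℝ}
    (hA : HasDerivAt A (A' t) t) (hA' : HasDerivAt A' (A'' t) t)
    (hθ : HasDerivAt θ (θ' t) t) (hθ' : HasDerivAt θ' (θ'' t) t) :
    HasDerivAt (fun t => ph1 A A' θ θ' t) (ph2 A A' A'' θ θ' θ'' t) t := by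
  have h := (hA'.mul hθ.cos).sub ((hA.mul hθ.sin).mul hθ')
  convert h using 1 <;> try rfl
  unfold ph2; simp only [Pi.mul_apply]; ring

lemma ph_contDiff {A θ : ℝ → ℝ} (hA : ContDiff ℝ (⊤ : ℕ∞) A) (hθ : ContDiff ℝ (⊤ : ℕ∞) θ) :
    ContDiff ℝ (⊤ : ℕ∞) (ph A θ) := hA.mul (Real.contDiff_cos.comp hθ)

lemma ph1_contDiff {A A' θ θ' : ℝ → ℝ} (hA : ContDiff ℝ (⊤ : ℕ∞) A) (hA' : ContDiff ℝ (⊤ : ℕ∞) A')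
    (hθ : ContDiff ℝ (⊤ : ℕ∞) θ) (hθ' : ContDiff ℝ (⊤ : ℕ∞) θ') :
    ContDiff ℝ (⊤ : ℕ∞) (fun t => ph1 A A' θ θ' t) :=
  (hA'.mul (Real.contDiff_cos.comp hθ)).sub ((hA.mul (Real.contDiff_sin.comp hθ)).mul hθ')

lemma ph2_contDiff {A A' A'' θ θ' θ'' : ℝ → ℝ} (hA : ContDiff ℝ (⊤ : ℕ∞) A) (hA' : ContDiff ℝ (⊤ : ℕ∞) A')
    (hA'' : ContDiff ℝ (⊤ : ℕ∞) A'') (hθ : ContDiff ℝ (⊤ : ℕ∞) θ) (hθ' : ContDiff ℝ (⊤ : ℕ∞) θ')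
    (hθ'' : ContDiff ℝ (⊤ : ℕ∞) θ'') : ContDiff ℝ (⊤ : ℕ∞) (fun t => ph2 A A' A'' θ θ' θ'' t) := by
  unfold ph2
  exact (((hA''.mul (Real.contDiff_cos.comp hθ)).sub
    (((contDiff_const.mul hA').mul (Real.contDiff_sin.comp hθ)).mul hθ')).sub
    ((hA.mul (Real.contDiff_cos.comp hθ)).mul (hθ'.pow 2))).sub
    ((hA.mul (Real.contDiff_sin.comp hθ)).mul hθ'')

open Real

/-- A C^2-tracked curve segment on `[0,L]` from `(a,b)` to `(c,e)` (value, derivative). -/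
structure Seg (L a b c e : ℝ) where
  f : ℝ → ℝ
  f1 : ℝ → ℝ
  f2 : ℝ → ℝ
  hd1 : ∀ t, HasDerivAt f (f1 t) t
  hd2 : ∀ t, HasDerivAt f1 (f2 t) t
  sm : ContDiff ℝ (⊤ : ℕ∞) f
  sm1 : ContDiff ℝ (⊤ : ℕ∞) f1
  sm2 : ContDiff ℝ (⊤ : ℕ∞) f2
  v0 : f 0 = a
  d0 : f1 0 = b
  vL : f L = c
  dL : f1 L = e

def hermSeg (L a b c e : ℝ) (hL : L ≠ 0) : Seg L a b c e where
  f := fun t => herm L a b c e t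
  f1 := fun t => herm1 L a b c e t
  f2 := fun t => herm2 L a b c e t
  hd1 := fun t => herm_hasDerivAt L a b c e t
  hd2 := fun t => herm1_hasDerivAt L a b c e t
  sm := herm_contDiff ..
  sm1 := herm1_contDiff ..
  sm2 := herm2_contDiff ..
  v0 := herm_zero ..
  d0 := herm1_zero ..
  vL := herm_end _ _ _ _ _ hL
  dL := herm1_end _ _ _ _ _ hL

/-- integer winding choice for the first-half phase segment -/
def kk0 (L a b : ℝ) : ℤ := ⌈(L + ang a b)/(2*π)⌉

lemma kk0_ge (L a b : ℝ) : L ≤ (kk0 L a b : ℝ)*(2*π) - ang a b := by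
  have h2π : (0:ℝ) < 2*π := by positivity
  have := Int.le_ceil ((L + ang a b)/(2*π))
  have h := (div_le_iff₀ h2π).mp this
  rw [kk0]; linarith

def kk1 (L c e : ℝ) : ℤ := ⌈(L - ang c e)/(2*π)⌉

lemma kk1_ge (L c e : ℝ) : L ≤ ang c e + (kk1 L c e : ℝ)*(2*π) := by
  have h2π : (0:ℝ) < 2*π := by positivity
  have := Int.le_ceil ((L - ang c e)/(2*π))
  have h := (div_le_iff₀ h2π).mp this
  rw [kk1]; linarith

section Phase0
variable (L a b : ℝ)

def A0 : ℝ → ℝ := fun t => herm L (rad a b) 0 1 0 t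
def A0' : ℝ → ℝ := fun t => herm1 L (rad a b) 0 1 0 t
def A0'' : ℝ → ℝ := fun t => herm2 L (rad a b) 0 1 0 t
def Θ0 : ℝ → ℝ := fun t => herm L (ang a b) 1 ((kk0 L a b : ℝ)*(2*π)) 1 t
def Θ0' : ℝ → ℝ := fun t => herm1 L (ang a b) 1 ((kk0 L a b : ℝ)*(2*π)) 1 t
def Θ0'' : ℝ → ℝ := fun t => herm2 L (ang a b) 1 ((kk0 L a b : ℝ)*(2*π)) 1 t

def phaseSeg0 (hL : 0 < L) (hab : ¬(a = 0 ∧ b = 0)) : Seg L a b 1 0 where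
  f := ph (A0 L a b) (Θ0 L a b)
  f1 := fun t => ph1 (A0 L a b) (A0' L a b) (Θ0 L a b) (Θ0' L a b) t
  f2 := fun t => ph2 (A0 L a b) (A0' L a b) (A0'' L a b) (Θ0 L a b) (Θ0' L a b) (Θ0'' L a b) t
  hd1 := fun t => ph_hasDerivAt (herm_hasDerivAt ..) (herm_hasDerivAt ..)
  hd2 := fun t => ph1_hasDerivAt (herm_hasDerivAt ..) (herm1_hasDerivAt ..)
    (herm_hasDerivAt ..) (herm1_hasDerivAt ..)
  sm := ph_contDiff (herm_contDiff ..) (herm_contDiff ..)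
  sm1 := ph1_contDiff (herm_contDiff ..) (herm1_contDiff ..) (herm_contDiff ..) (herm1_contDiff ..)
  sm2 := ph2_contDiff (herm_contDiff ..) (herm1_contDiff ..) (herm2_contDiff ..)
    (herm_contDiff ..) (herm1_contDiff ..) (herm2_contDiff ..)
  v0 := by
    show A0 L a b 0 * Real.cos (Θ0 L a b 0) = a
    rw [A0, Θ0]; simp only [herm_zero]; exact rad_cos a b hab
  d0 := by
    show A0' L a b 0 * Real.cos (Θ0 L a b 0) - A0 L a b 0 * Real.sin (Θ0 L a b 0) * Θ0' L a b 0 = b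
    rw [A0, A0', Θ0, Θ0']; simp only [herm_zero, herm1_zero]
    have := rad_sin a b hab
    ring_nf
    ring_nf at this
    linarith [this]
  vL := by
    show A0 L a b L * Real.cos (Θ0 L a b L) = 1
    rw [A0, Θ0]; simp only [herm_end _ _ _ _ _ hL.ne']
    rw [Real.cos_int_mul_two_pi]; ring
  dL := by
    show A0' L a b L * Real.cos (Θ0 L a b L) - A0 L a b L * Real.sin (Θ0 L a b L) * Θ0' L a b L = 0
    rw [A0, A0', Θ0, Θ0']; simp only [herm_end _ _ _ _ _ hL.ne', herm1_end _ _ _ _ _ hL.ne']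
    rw [show Real.sin ((kk0 L a b : ℝ)*(2*π)) = 0 by
      simpa using Real.sin_add_int_mul_two_pi 0 (kk0 L a b)]
    ring

lemma phaseSeg0_nz (hL : 0 < L) (hab : ¬(a = 0 ∧ b = 0)) (t : ℝ) (h0 : 0 ≤ t) (h1 : t ≤ L) :
    (phaseSeg0 L a b hL hab).f t ≠ 0 ∨ (phaseSeg0 L a b hL hab).f1 t ≠ 0 := by
  by_cases hf : (phaseSeg0 L a b hL hab).f t = 0
  · right
    have hA : 0 < A0 L a b t := herm_pos L (rad a b) 1 t hL (rad_pos a b hab) one_pos h0 h1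
    have hθ : 1 ≤ Θ0' L a b t := by
      have := kk0_ge L a b
      exact herm1_ge_one L (ang a b) ((kk0 L a b : ℝ)*(2*π)) t hL (by linarith) h0 h1
    have hcos : Real.cos (Θ0 L a b t) = 0 := by
      have : A0 L a b t * Real.cos (Θ0 L a b t) = 0 := hf
      rcases mul_eq_zero.mp this with h | h
      · exact absurd h hA.ne'
      · exact h
    have hsin : Real.sin (Θ0 L a b t) ^ 2 = 1 := by
      have := Real.sin_sq_add_cos_sq (Θ0 L a b t)
      rw [hcos] at this; linarith
    show ph1 (A0 L a b) (A0' L a b) (Θ0 L a b) (Θ0' L a b) t ≠ 0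
    rw [ph1, hcos]
    intro hcontra
    have h2 : A0 L a b t * Real.sin (Θ0 L a b t) * Θ0' L a b t = 0 := by linarith
    have hs : Real.sin (Θ0 L a b t) ≠ 0 := by
      intro h; rw [h] at hsin; simp at hsin
    exact (mul_ne_zero (mul_ne_zero hA.ne' hs) (by linarith)) h2
  · left; exact hf

end Phase0

section Phase1
variable (L c e : ℝ)

def B1 : ℝ → ℝ := fun t => herm L 1 0 (rad c e) 0 t
def B1' : ℝ → ℝ := fun t => herm1 L 1 0 (rad c e) 0 t
def B1'' : ℝ → ℝ := fun t => herm2 L 1 0 (rad c e) 0 t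
def Ψ1 : ℝ → ℝ := fun t => herm L 0 1 (ang c e + (kk1 L c e : ℝ)*(2*π)) 1 t
def Ψ1' : ℝ → ℝ := fun t => herm1 L 0 1 (ang c e + (kk1 L c e : ℝ)*(2*π)) 1 t
def Ψ1'' : ℝ → ℝ := fun t => herm2 L 0 1 (ang c e + (kk1 L c e : ℝ)*(2*π)) 1 t

def phaseSeg1 (hL : 0 < L) (hce : ¬(c = 0 ∧ e = 0)) : Seg L 1 0 c e where
  f := ph (B1 L c e) (Ψ1 L c e)
  f1 := fun t => ph1 (B1 L c e) (B1' L c e) (Ψ1 L c e) (Ψ1' L c e) t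
  f2 := fun t => ph2 (B1 L c e) (B1' L c e) (B1'' L c e) (Ψ1 L c e) (Ψ1' L c e) (Ψ1'' L c e) t
  hd1 := fun t => ph_hasDerivAt (herm_hasDerivAt ..) (herm_hasDerivAt ..)
  hd2 := fun t => ph1_hasDerivAt (herm_hasDerivAt ..) (herm1_hasDerivAt ..)
    (herm_hasDerivAt ..) (herm1_hasDerivAt ..)
  sm := ph_contDiff (herm_contDiff ..) (herm_contDiff ..)
  sm1 := ph1_contDiff (herm_contDiff ..) (herm1_contDiff ..) (herm_contDiff ..) (herm1_contDiff ..)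
  sm2 := ph2_contDiff (herm_contDiff ..) (herm1_contDiff ..) (herm2_contDiff ..)
    (herm_contDiff ..) (herm1_contDiff ..) (herm2_contDiff ..)
  v0 := by
    show B1 L c e 0 * Real.cos (Ψ1 L c e 0) = 1
    rw [B1, Ψ1]; simp only [herm_zero]; simp
  d0 := by
    show B1' L c e 0 * Real.cos (Ψ1 L c e 0) - B1 L c e 0 * Real.sin (Ψ1 L c e 0) * Ψ1' L c e 0 = 0
    rw [B1, B1', Ψ1, Ψ1']; simp only [herm_zero, herm1_zero]; simp
  vL := by
    show B1 L c e L * Real.cos (Ψ1 L c e L) = c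
    rw [B1, Ψ1]; simp only [herm_end _ _ _ _ _ hL.ne']
    rw [Real.cos_add_int_mul_two_pi]; exact rad_cos c e hce
  dL := by
    show B1' L c e L * Real.cos (Ψ1 L c e L) - B1 L c e L * Real.sin (Ψ1 L c e L) * Ψ1' L c e L = e
    rw [B1, B1', Ψ1, Ψ1']; simp only [herm_end _ _ _ _ _ hL.ne', herm1_end _ _ _ _ _ hL.ne']
    rw [Real.sin_add_int_mul_two_pi]
    have := rad_sin c e hce
    ring_nf; ring_nf at this; linarith

lemma phaseSeg1_nz (hL : 0 < L) (hce : ¬(c = 0 ∧ e = 0)) (t : ℝ) (h0 : 0 ≤ t) (h1 : t ≤ L) :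
    (phaseSeg1 L c e hL hce).f t ≠ 0 ∨ (phaseSeg1 L c e hL hce).f1 t ≠ 0 := by
  by_cases hf : (phaseSeg1 L c e hL hce).f t = 0
  · right
    have hB : 0 < B1 L c e t := herm_pos L 1 (rad c e) t hL one_pos (rad_pos c e hce) h0 h1
    have hθ : 1 ≤ Ψ1' L c e t := by
      have := kk1_ge L c e
      exact herm1_ge_one L 0 (ang c e + (kk1 L c e : ℝ)*(2*π)) t hL (by linarith) h0 h1
    have hcos : Real.cos (Ψ1 L c e t) = 0 := by
      have : B1 L c e t * Real.cos (Ψ1 L c e t) = 0 := hf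
      rcases mul_eq_zero.mp this with h | h
      · exact absurd h hB.ne'
      · exact h
    have hsin : Real.sin (Ψ1 L c e t) ^ 2 = 1 := by
      have := Real.sin_sq_add_cos_sq (Ψ1 L c e t)
      rw [hcos] at this; linarith
    show ph1 (B1 L c e) (B1' L c e) (Ψ1 L c e) (Ψ1' L c e) t ≠ 0
    rw [ph1, hcos]
    intro hcontra
    have h2 : B1 L c e t * Real.sin (Ψ1 L c e t) * Ψ1' L c e t = 0 := by linarith
    have hs : Real.sin (Ψ1 L c e t) ≠ 0 := by
      intro h; rw [h] at hsin; simp at hsin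
    exact (mul_ne_zero (mul_ne_zero hB.ne' hs) (by linarith)) h2
  · left; exact hf

end Phase1
end

noncomputable section
open Finset Real

/-- coefficient vector for the exact control -/
def cvec (E F G : ℝ) {d : ℕ} (ρ w : Fin d → ℝ) : Fin d → ℝ := fun i =>
  ((∑ j, w j * ρ j)/((E+F+G)*(∑ j, ρ j^2)^2)
    - (1/(F*(∑ j, ρ j^2))) * ((∑ j, w j * ρ j)/(∑ j, ρ j^2))) * ρ i
  + (1/(F*(∑ j, ρ j^2))) * w i

def ctrl (E F G : ℝ) {d : ℕ} (ρ w : Fin d → ℝ) : Fin d → Fin d → ℝ :=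
  fun n m => ρ n * cvec E F G ρ w m

lemma nsq_pos {d : ℕ} (ρ : Fin d → ℝ) (hρ : ρ ≠ 0) : 0 < ∑ j, ρ j^2 := by
  obtain ⟨j, hj⟩ : ∃ j, ρ j ≠ 0 := by
    by_contra h; push_neg at h; exact hρ (funext h)
  have h1 : 0 < ρ j ^ 2 := by positivity
  have h2 : ∀ i ∈ Finset.univ, 0 ≤ ρ i ^2 := fun i _ => sq_nonneg _
  calc 0 < ρ j ^2 := h1
    _ ≤ ∑ j, ρ j^2 := Finset.single_le_sum h2 (Finset.mem_univ j)

lemma ctrl_spec (E F G : ℝ) {d : ℕ} (ρ w : Fin d → ℝ)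
    (hF : F ≠ 0) (hEFG : E + F + G ≠ 0) (hρ : ρ ≠ 0) (i : Fin d) :
    ∑ m, ∑ n, ctrl E F G ρ w n m * (∑ j, ρ j * sigmaCoeff E F G m n i j) = w i := by
  have hn : (∑ j, ρ j^2) ≠ 0 := (nsq_pos ρ hρ).ne'
  set nsq := ∑ j, ρ j^2 with hnsq
  set α := ∑ j, w j * ρ j with hα
  set c1 : ℝ := α/((E+F+G)*nsq^2) - (1/(F*nsq)) * (α/nsq) with hc1
  set c2 : ℝ := 1/(F*nsq) with hc2
  have hcv : ∀ j, cvec E F G ρ w j = c1 * ρ j + c2 * w j := fun j => rfl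
  have h1 : ∀ m n, (∑ j, ρ j * sigmaCoeff E F G m n i j)
      = E * kd m n * ρ i + F * kd i m * ρ n + G * kd i n * ρ m := by
    intro m n
    simp only [sigmaCoeff, kd, mul_add, Finset.sum_add_distrib, mul_ite, ite_mul,
      mul_one, mul_zero, one_mul, zero_mul]
    congr 1
    · congr 1
      · by_cases h : m = n <;> simp [h, Finset.sum_ite_eq', eq_comm, mul_comm]
      · by_cases h : i = m <;> simp [h, Finset.sum_ite_eq', eq_comm, mul_comm]
    · by_cases h : i = n <;> simp [h, Finset.sum_ite_eq', eq_comm, mul_comm]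
  have hS : (∑ m, ρ m * cvec E F G ρ w m) = c1 * nsq + c2 * α := by
    simp only [hcv]
    rw [Finset.sum_congr rfl (fun m _ => by ring :
      ∀ m ∈ Finset.univ, ρ m * (c1 * ρ m + c2 * w m) = c1 * ρ m^2 + c2 * (w m * ρ m))]
    rw [Finset.sum_add_distrib, ← Finset.mul_sum, ← Finset.mul_sum]
  have key : (∑ m, ∑ n, ctrl E F G ρ w n m * (∑ j, ρ j * sigmaCoeff E F G m n i j))
      = E * ρ i * (∑ m, ρ m * cvec E F G ρ w m)
        + F * nsq * cvec E F G ρ w i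
        + G * ρ i * (∑ m, ρ m * cvec E F G ρ w m) := by
    simp only [h1, ctrl]
    rw [hnsq]
    simp only [kd, mul_ite, ite_mul, mul_one, mul_zero, one_mul, zero_mul, mul_add,
      Finset.sum_add_distrib, Finset.sum_ite_eq, Finset.sum_ite_eq']
    simp only [Finset.mem_univ, if_true]
    rw [Finset.sum_comm]
    simp only [Finset.sum_ite_eq, Finset.mem_univ, if_true]
    simp only [Finset.mul_sum, Finset.sum_mul]
    congr 1
    · congr 1
      · exact Finset.sum_congr rfl fun m _ => by ring
      · exact Finset.sum_congr rfl fun m _ => by ring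
    · exact Finset.sum_congr rfl fun m _ => by ring
  rw [key, hS, hcv, hc1, hc2]
  have hEFGn : (E+F+G)*nsq^2 ≠ 0 := by
    apply mul_ne_zero hEFG; positivity
  field_simp
  ring

lemma ctrl_contDiffAt (E F G : ℝ) {d : ℕ} (hF : F ≠ 0) (hEFG : E + F + G ≠ 0)
    {R W : ℝ → Fin d → ℝ} {t : ℝ}
    (hR : ∀ i, ContDiffAt ℝ (⊤ : ℕ∞) (fun t => R t i) t)
    (hW : ∀ i, ContDiffAt ℝ (⊤ : ℕ∞) (fun t => W t i) t)
    (hne : R t ≠ 0) : ContDiffAt ℝ (⊤ : ℕ∞) (fun t => ctrl E F G (R t) (W t)) t := by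
  have hnsq : ContDiffAt ℝ (⊤ : ℕ∞) (fun t => ∑ j, R t j ^ 2) t :=
    ContDiffAt.sum fun j _ => (hR j).pow 2
  have hα : ContDiffAt ℝ (⊤ : ℕ∞) (fun t => ∑ j, W t j * R t j) t :=
    ContDiffAt.sum fun j _ => (hW j).mul (hR j)
  have hnsq0 : (∑ j, R t j ^ 2) ≠ 0 := (nsq_pos _ hne).ne'
  have hB : ContDiffAt ℝ (⊤ : ℕ∞) (fun t => 1/(F * ∑ j, R t j ^ 2)) t :=
    contDiffAt_const.div (contDiffAt_const.mul hnsq) (mul_ne_zero hF hnsq0)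
  apply contDiffAt_pi.2; intro n
  apply contDiffAt_pi.2; intro m
  exact (hR n).mul
    ((((hα.div (contDiffAt_const.mul (hnsq.pow 2))
        (mul_ne_zero hEFG (pow_ne_zero 2 hnsq0))).sub
      (hB.mul (hα.div hnsq hnsq0))).mul (hR m)).add (hB.mul (hW m)))

section Piece
variable {L : ℝ} {u u' v v' : ℝ → ℝ} {t : ℝ}

lemma piece_ev_lt (ht : t < L) (u v : ℝ → ℝ) :
    (fun t => if t ≤ L then u t else v (t - L)) =ᶠ[nhds t] u := by
  filter_upwards [Iio_mem_nhds ht] with y hy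
  simp [le_of_lt (Set.mem_Iio.mp hy)]

lemma piece_ev_gt (ht : L < t) (u v : ℝ → ℝ) :
    (fun t => if t ≤ L then u t else v (t - L)) =ᶠ[nhds t] (fun t => v (t - L)) := by
  filter_upwards [Ioi_mem_nhds ht] with y hy
  simp [not_le.mpr (Set.mem_Ioi.mp hy)]

lemma piece_deriv_lt (hd : ∀ s, HasDerivAt u (u' s) s) (ht : t < L) :
    HasDerivAt (fun t => if t ≤ L then u t else v (t - L)) (u' t) t :=
  (hd t).congr_of_eventuallyEq (piece_ev_lt ht u v)

lemma piece_deriv_gt (hd : ∀ s, HasDerivAt v (v' s) s) (ht : L < t) :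
    HasDerivAt (fun t => if t ≤ L then u t else v (t - L)) (v' (t - L)) t := by
  have h := (hd (t - L)).comp t ((hasDerivAt_id t).sub_const L)
  simp only [mul_one] at h
  exact h.congr_of_eventuallyEq (piece_ev_gt ht u v)

lemma piece_cdAt_lt (hu : ContDiff ℝ (⊤ : ℕ∞) u) (ht : t < L) :
    ContDiffAt ℝ (⊤ : ℕ∞) (fun t => if t ≤ L then u t else v (t - L)) t :=
  hu.contDiffAt.congr_of_eventuallyEq (piece_ev_lt ht u v)

lemma piece_cdAt_gt (hv : ContDiff ℝ (⊤ : ℕ∞) v) (ht : L < t) :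
    ContDiffAt ℝ (⊤ : ℕ∞) (fun t => if t ≤ L then u t else v (t - L)) t :=
  ((hv.comp (contDiff_id.sub contDiff_const)).contDiffAt).congr_of_eventuallyEq
    (piece_ev_gt ht u v)

lemma piece_cont (hu : Continuous u) (hv : Continuous v) (hb : u L = v 0) :
    Continuous (fun t => if t ≤ L then u t else v (t - L)) := by
  apply Continuous.if_le hu (hv.comp (continuous_id.sub continuous_const)) continuous_id
    continuous_const
  intro x hx
  subst hx
  simpa using hb

end Piece

lemma isolated_zero {g : ℝ → ℝ} {c t : ℝ} (h : HasDerivAt g c t) (h0 : g t = 0) (hc : c ≠ 0) :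
    ∀ᶠ y in nhdsWithin t {t}ᶜ, g y ≠ 0 := by
  have hs := hasDerivAt_iff_tendsto_slope.mp h
  have h2 : ∀ᶠ y in nhdsWithin t {t}ᶜ, slope g t y ≠ 0 := hs.eventually_ne hc
  filter_upwards [h2, self_mem_nhdsWithin] with y hy hyt hgy
  apply hy
  rw [slope_def_field, h0, hgy]
  simp

end

/-- controllability, Proposition 2: for any `T > 0` and nonzero
`p₀, p₁` there is a piecewise smooth control `u` steering the system
`ṗ = X₀(p) + Σ u^n_m X^m_n(p)` from `p₀` to `p₁` along a nowhere vanishing path. -/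
theorem controllability (d : ℕ) (hd : 1 ≤ d) (τ : ℝ) (hτ : 0 < τ)
    (E F G : ℝ) (hF : 0 < F) (hEFG : 0 < E + F + G)
    (T : ℝ) (hT : 0 < T)
    (p₀ p₁ : (Fin d → ℝ) × (Fin d → ℝ)) (h₀ : p₀ ≠ 0) (h₁ : p₁ ≠ 0) :
    ∃ (u : ℝ → Fin d → Fin d → ℝ) (p : ℝ → (Fin d → ℝ) × (Fin d → ℝ))
      (s : Finset ℝ),
      (∀ t ∉ (s : Set ℝ), ContDiffAt ℝ (⊤ : ℕ∞) u t) ∧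
      ContinuousOn p (Set.Icc 0 T) ∧
      p 0 = p₀ ∧ p T = p₁ ∧
      (∀ t ∈ Set.Icc (0 : ℝ) T, p t ≠ 0) ∧
      (∀ t ∈ Set.Icc (0 : ℝ) T \ (s : Set ℝ),
        HasDerivAt p
          (X0 τ (p t) + ∑ m, ∑ n, u t n m • Xmn E F G m n (p t)) t) := by
  classical
  have hτ' : τ ≠ 0 := hτ.ne'
  set L := T/2 with hLdef
  have hL : 0 < L := by rw [hLdef]; positivity
  have hLT : L < T := by rw [hLdef]; linarith
  have hTL : T - L = L := by rw [hLdef]; ring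
  obtain ⟨i₀, hi₀⟩ : ∃ i, ¬(p₀.1 i = 0 ∧ p₀.2 i / τ = 0) := by
    by_contra h
    push_neg at h
    apply h₀
    refine Prod.ext_iff.mpr ⟨funext fun i => (h i).1, funext fun i => ?_⟩
    exact (div_eq_zero_iff.mp (h i).2).resolve_right hτ'
  obtain ⟨i₁, hi₁⟩ : ∃ i, ¬(p₁.1 i = 0 ∧ p₁.2 i / τ = 0) := by
    by_contra h
    push_neg at h
    apply h₁
    refine Prod.ext_iff.mpr ⟨funext fun i => (h i).1, funext fun i => ?_⟩
    exact (div_eq_zero_iff.mp (h i).2).resolve_right hτ'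
  set S₀ : ∀ i : Fin d, Seg L (p₀.1 i) (p₀.2 i / τ) 1 0 :=
    Function.update (fun i => hermSeg L (p₀.1 i) (p₀.2 i / τ) 1 0 hL.ne') i₀
      (phaseSeg0 L (p₀.1 i₀) (p₀.2 i₀ / τ) hL hi₀) with hS₀def
  set S₁ : ∀ i : Fin d, Seg L 1 0 (p₁.1 i) (p₁.2 i / τ) :=
    Function.update (fun i => hermSeg L 1 0 (p₁.1 i) (p₁.2 i / τ) hL.ne') i₁
      (phaseSeg1 L (p₁.1 i₁) (p₁.2 i₁ / τ) hL hi₁) with hS₁def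
  have hS₀i₀ : S₀ i₀ = phaseSeg0 L (p₀.1 i₀) (p₀.2 i₀ / τ) hL hi₀ := by
    rw [hS₀def]; exact Function.update_self _ _ _
  have hS₁i₁ : S₁ i₁ = phaseSeg1 L (p₁.1 i₁) (p₁.2 i₁ / τ) hL hi₁ := by
    rw [hS₁def]; exact Function.update_self _ _ _
  set Rv : ℝ → Fin d → ℝ := fun t i => if t ≤ L then (S₀ i).f t else (S₁ i).f (t - L)
    with hRvdef
  set Rv1 : ℝ → Fin d → ℝ := fun t i => if t ≤ L then (S₀ i).f1 t else (S₁ i).f1 (t - L)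
    with hRv1def
  set Rv2 : ℝ → Fin d → ℝ := fun t i => if t ≤ L then (S₀ i).f2 t else (S₁ i).f2 (t - L)
    with hRv2def
  set W : ℝ → Fin d → ℝ := fun t i => τ * Rv2 t i + Rv1 t i with hWdef
  set pf : ℝ → (Fin d → ℝ) × (Fin d → ℝ) := fun t => (Rv t, fun i => τ * Rv1 t i) with hpfdef
  set uf : ℝ → Fin d → Fin d → ℝ :=
    fun t => if (0 < t ∧ t < T ∧ Rv t ≠ 0) then ctrl E F G (Rv t) (W t) else 0 with hufdef
  have hdRv : ∀ (i) (t : ℝ), t ≠ L → HasDerivAt (fun t => Rv t i) (Rv1 t i) t := by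
    intro i t ht
    rcases lt_or_gt_of_ne ht with h | h
    · simp only [hRvdef, hRv1def]
      have := piece_deriv_lt (v := (S₁ i).f) (S₀ i).hd1 h
      simpa [le_of_lt h] using this
    · simp only [hRvdef, hRv1def]
      have := piece_deriv_gt (u := (S₀ i).f) (S₁ i).hd1 h
      simpa [not_le.mpr h] using this
  have hdRv1 : ∀ (i) (t : ℝ), t ≠ L → HasDerivAt (fun t => Rv1 t i) (Rv2 t i) t := by
    intro i t ht
    rcases lt_or_gt_of_ne ht with h | h
    · simp only [hRv1def, hRv2def]
      have := piece_deriv_lt (v := (S₁ i).f1) (S₀ i).hd2 h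
      simpa [le_of_lt h] using this
    · simp only [hRv1def, hRv2def]
      have := piece_deriv_gt (u := (S₀ i).f1) (S₁ i).hd2 h
      simpa [not_le.mpr h] using this
  have hcdRv : ∀ (i) (t : ℝ), t ≠ L → ContDiffAt ℝ (⊤ : ℕ∞) (fun t => Rv t i) t := by
    intro i t ht
    rcases lt_or_gt_of_ne ht with h | h
    · simp only [hRvdef]; exact piece_cdAt_lt (S₀ i).sm h
    · simp only [hRvdef]; exact piece_cdAt_gt (S₁ i).sm h
  have hcdRv1 : ∀ (i) (t : ℝ), t ≠ L → ContDiffAt ℝ (⊤ : ℕ∞) (fun t => Rv1 t i) t := by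
    intro i t ht
    rcases lt_or_gt_of_ne ht with h | h
    · simp only [hRv1def]; exact piece_cdAt_lt (S₀ i).sm1 h
    · simp only [hRv1def]; exact piece_cdAt_gt (S₁ i).sm1 h
  have hcdRv2 : ∀ (i) (t : ℝ), t ≠ L → ContDiffAt ℝ (⊤ : ℕ∞) (fun t => Rv2 t i) t := by
    intro i t ht
    rcases lt_or_gt_of_ne ht with h | h
    · simp only [hRv2def]; exact piece_cdAt_lt (S₀ i).sm2 h
    · simp only [hRv2def]; exact piece_cdAt_gt (S₁ i).sm2 h
  have hcdW : ∀ (i) (t : ℝ), t ≠ L → ContDiffAt ℝ (⊤ : ℕ∞) (fun t => W t i) t := by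
    intro i t ht
    simp only [hWdef]
    exact (contDiffAt_const.mul (hcdRv2 i t ht)).add (hcdRv1 i t ht)
  have hcRv : ∀ i, Continuous (fun t => Rv t i) := by
    intro i
    simp only [hRvdef]
    exact piece_cont (S₀ i).sm.continuous (S₁ i).sm.continuous (by rw [(S₀ i).vL, (S₁ i).v0])
  have hcRv1 : ∀ i, Continuous (fun t => Rv1 t i) := by
    intro i
    simp only [hRv1def]
    exact piece_cont (S₀ i).sm1.continuous (S₁ i).sm1.continuous (by rw [(S₀ i).dL, (S₁ i).d0])
  have hcRvPi : Continuous (fun t => Rv t) := continuous_pi hcRv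
  have hcpf : Continuous pf := by
    simp only [hpfdef]
    exact hcRvPi.prodMk (continuous_pi fun i => continuous_const.mul (hcRv1 i))
  have hRv0 : ∀ i, Rv 0 i = p₀.1 i := by
    intro i; simp only [hRvdef]; rw [if_pos hL.le]; exact (S₀ i).v0
  have hRv10 : ∀ i, Rv1 0 i = p₀.2 i / τ := by
    intro i; simp only [hRv1def]; rw [if_pos hL.le]; exact (S₀ i).d0
  have hRvT : ∀ i, Rv T i = p₁.1 i := by
    intro i; simp only [hRvdef]; rw [if_neg (not_le.mpr hLT), hTL]; exact (S₁ i).vL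
  have hRv1T : ∀ i, Rv1 T i = p₁.2 i / τ := by
    intro i; simp only [hRv1def]; rw [if_neg (not_le.mpr hLT), hTL]; exact (S₁ i).dL
  have hRvL : Rv L i₀ = 1 := by
    simp only [hRvdef]; rw [if_pos le_rfl]; exact (S₀ i₀).vL
  have hnz : ∀ t : ℝ, 0 ≤ t → t ≤ T → ¬(Rv t = 0 ∧ Rv1 t = 0) := by
    rintro t ht0 htT ⟨hz, hz1⟩
    rcases le_or_gt t L with h | h
    · have h2 := phaseSeg0_nz L (p₀.1 i₀) (p₀.2 i₀ / τ) hL hi₀ t ht0 h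
      rw [← hS₀i₀] at h2
      have e1 : (S₀ i₀).f t = 0 := by
        have := congrFun hz i₀; simpa [hRvdef, h] using this
      have e2 : (S₀ i₀).f1 t = 0 := by
        have := congrFun hz1 i₀; simpa [hRv1def, h] using this
      rcases h2 with h2 | h2
      · exact h2 e1
      · exact h2 e2
    · have hx0 : 0 ≤ t - L := by linarith
      have hxL : t - L ≤ L := by linarith [hTL]
      have h2 := phaseSeg1_nz L (p₁.1 i₁) (p₁.2 i₁ / τ) hL hi₁ (t - L) hx0 hxL
      rw [← hS₁i₁] at h2
      have e1 : (S₁ i₁).f (t - L) = 0 := by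
        have := congrFun hz i₁; simpa [hRvdef, not_le.mpr h] using this
      have e2 : (S₁ i₁).f1 (t - L) = 0 := by
        have := congrFun hz1 i₁; simpa [hRv1def, not_le.mpr h] using this
      rcases h2 with h2 | h2
      · exact h2 e1
      · exact h2 e2
  have hpfnz : ∀ t ∈ Set.Icc (0 : ℝ) T, pf t ≠ 0 := by
    rintro t ⟨ht0, htT⟩ heq
    simp only [hpfdef] at heq
    rw [Prod.ext_iff] at heq
    apply hnz t ht0 htT
    refine ⟨heq.1, funext fun i => ?_⟩
    have := congrFun heq.2 i
    simp only [Pi.zero_apply] at this ⊢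
    exact (mul_eq_zero.mp this).resolve_left hτ'
  have hZfin : Set.Finite {t : ℝ | t ∈ Set.Icc (0 : ℝ) T ∧ Rv t = 0} := by
    by_contra hinf
    have hinf' : Set.Infinite {t : ℝ | t ∈ Set.Icc (0 : ℝ) T ∧ Rv t = 0} := hinf
    obtain ⟨t, htK, hacc⟩ := hinf'.exists_accPt_of_subset_isCompact isCompact_Icc
      (fun x hx => hx.1)
    have hfreq : ∃ᶠ y in nhdsWithin t {t}ᶜ, y ∈ {t : ℝ | t ∈ Set.Icc (0 : ℝ) T ∧ Rv t = 0} := by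
      have h := accPt_iff_frequently.mp hacc
      rw [frequently_nhdsWithin_iff]
      exact h.mono fun y hy => ⟨hy.2, hy.1⟩
    by_cases hz : Rv t = 0
    · have htL : t ≠ L := by
        intro h; rw [h] at hz
        have := congrFun hz i₀
        rw [hRvL] at this
        exact one_ne_zero this
      obtain ⟨i, hi⟩ : ∃ i, Rv1 t i ≠ 0 := by
        by_contra hno; push_neg at hno
        exact hnz t htK.1 htK.2 ⟨hz, funext hno⟩
      have hev := isolated_zero (hdRv i t htL) (congrFun hz i) hi
      obtain ⟨y, hy1, hy2⟩ := (hfreq.and_eventually hev).exists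
      exact hy2 (congrFun hy1.2 i)
    · have hev : ∀ᶠ y in nhdsWithin t {t}ᶜ, Rv y ≠ 0 :=
        (hcRvPi.continuousAt.eventually_ne hz).filter_mono nhdsWithin_le_nhds
      obtain ⟨y, hy1, hy2⟩ := (hfreq.and_eventually hev).exists
      exact hy2 hy1.2
  refine ⟨uf, pf, insert (0:ℝ) (insert L (insert T hZfin.toFinset)), ?_, ?_, ?_, ?_, ?_, ?_⟩
  · -- smoothness of uf
    intro t hts
    simp only [Finset.coe_insert, Set.mem_insert_iff, Finset.mem_coe,
      Set.Finite.mem_toFinset, Set.mem_setOf_eq] at hts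
    push_neg at hts
    obtain ⟨ht0, htL, htT, htZ⟩ := hts
    by_cases hin : 0 < t ∧ t < T
    · have hRvt : Rv t ≠ 0 := fun h => htZ ⟨hin.1.le, hin.2.le⟩ h
      have hev : uf =ᶠ[nhds t] fun y => ctrl E F G (Rv y) (W y) := by
        filter_upwards [Ioi_mem_nhds hin.1, Iio_mem_nhds hin.2,
          hcRvPi.continuousAt.eventually_ne hRvt] with y h1 h2 h3
        simp only [hufdef]
        rw [if_pos ⟨Set.mem_Ioi.mp h1, Set.mem_Iio.mp h2, h3⟩]
      exact (ctrl_contDiffAt E F G hF.ne' hEFG.ne' (fun i => hcdRv i t htL)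
        (fun i => hcdW i t htL) hRvt).congr_of_eventuallyEq hev
    · have hout : t < 0 ∨ T < t := by
        rcases not_and_or.mp hin with h | h
        · left; exact lt_of_le_of_ne (not_lt.mp h) ht0
        · right; exact lt_of_le_of_ne (not_lt.mp h) (Ne.symm htT)
      have hev : uf =ᶠ[nhds t] (fun _ => 0) := by
        rcases hout with h | h
        · filter_upwards [Iio_mem_nhds h] with y hy
          simp only [hufdef]
          rw [if_neg]
          rintro ⟨hy1, -, -⟩
          exact absurd hy1 (not_lt.mpr (le_of_lt (Set.mem_Iio.mp hy)))
        · filter_upwards [Ioi_mem_nhds h] with y hy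
          simp only [hufdef]
          rw [if_neg]
          rintro ⟨-, hy2, -⟩
          exact absurd hy2 (not_lt.mpr (le_of_lt (Set.mem_Ioi.mp hy)))
      exact contDiffAt_const.congr_of_eventuallyEq hev
  · exact hcpf.continuousOn
  · simp only [hpfdef]
    refine Prod.ext_iff.mpr ⟨funext hRv0, funext fun i => ?_⟩
    show τ * Rv1 0 i = p₀.2 i
    rw [hRv10 i]
    field_simp
  · simp only [hpfdef]
    refine Prod.ext_iff.mpr ⟨funext hRvT, funext fun i => ?_⟩
    show τ * Rv1 T i = p₁.2 i
    rw [hRv1T i]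
    field_simp
  · exact hpfnz
  · rintro t ⟨⟨ht0, htT⟩, hts⟩
    simp only [Finset.coe_insert, Set.mem_insert_iff, Finset.mem_coe,
      Set.Finite.mem_toFinset, Set.mem_setOf_eq] at hts
    push_neg at hts
    obtain ⟨h0, hLne, hTne, hZ⟩ := hts
    have ht0' : 0 < t := lt_of_le_of_ne ht0 (Ne.symm h0)
    have htT' : t < T := lt_of_le_of_ne htT hTne
    have hRvt : Rv t ≠ 0 := fun h => hZ ⟨ht0, htT⟩ h
    have hu : uf t = ctrl E F G (Rv t) (W t) := by
      simp only [hufdef]; rw [if_pos ⟨ht0', htT', hRvt⟩]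
    have hd : HasDerivAt pf (Rv1 t, fun i => τ * Rv2 t i) t := by
      simp only [hpfdef]
      apply HasDerivAt.prodMk
      · exact hasDerivAt_pi.2 fun i => hdRv i t hLne
      · exact hasDerivAt_pi.2 fun i => ((hdRv1 i t hLne).const_mul τ)
    have heq : X0 τ (pf t) + ∑ m, ∑ n, uf t n m • Xmn E F G m n (pf t)
        = (Rv1 t, fun i => τ * Rv2 t i) := by
      rw [hu]
      refine Prod.ext_iff.mpr ⟨?_, ?_⟩
      · rw [Prod.fst_add]
        have hz : (∑ m, ∑ n, ctrl E F G (Rv t) (W t) n m • Xmn E F G m n (pf t)).1 = 0 := by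
          simp [Xmn, Prod.fst_sum]
        rw [hz, add_zero]
        simp only [X0, hpfdef]
        funext i
        simp only [Pi.smul_apply, smul_eq_mul]
        field_simp
      · rw [Prod.snd_add]
        funext i
        rw [Pi.add_apply]
        have h2 : (∑ m, ∑ n, ctrl E F G (Rv t) (W t) n m • Xmn E F G m n (pf t)).2 i
            = ∑ m, ∑ n, ctrl E F G (Rv t) (W t) n m
                * (∑ j, Rv t j * sigmaCoeff E F G m n i j) := by
          simp [Xmn, Prod.snd_sum, Finset.sum_apply, hpfdef]
        rw [h2, ctrl_spec E F G (Rv t) (W t) hF.ne' hEFG.ne' hRvt i]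
        simp only [X0, hpfdef, hWdef, Pi.smul_apply, Pi.neg_apply, smul_eq_mul]
        field_simp
        ring
    exact heq ▸ hd
end

section
/- Let d ≥ 1, τ > 0 and smooth curve ρ : [0,T] → ℝ^d with ρ(t) ≠ 0 for all t. Set χ(t) = τρ̇(t) and φ(t) = τχ̇(t) + χ(t). Then with α(t) = −((E+G)/((E+F+G)F))·(ρ(t)·φ(t))/|ρ(t)|⁴, β(t) = 1/(F|ρ(t)|²), and u^n_m(t) = (1/τ)(α(t)ρ^n(t)ρ^m(t) + β(t)ρ^n(t)φ^m(t)), the curve p(t) = (ρ(t), χ(t)) solves ṗ = X₀(p) + Σ_{m,n} u^n_m(t) X^m_n(p). -/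
/-!
Contracting the coefficients `σ(m,n)` with `ρ`, a rank-two control `u^n_m = c (a ρ^n ρ^m + b ρ^n φ^m)`
pushes `χ` along a combination of `ρ` and `φ` whose coefficients are linear in `(a, b)`. The given
`α`, `β` kill the `ρ`-component and normalise the `φ`-component, so with `c = 1/τ` the `χ`-equation
reads `τ χ̇ = φ - χ`, which is the definition of `φ`.
-/

open Finset

section
variable {d : ℕ} (E F G : ℝ)

theorem sum_mul_sigmaCoeff (ρ : Fin d → ℝ) (m n i : Fin d) :
    ∑ j, ρ j * sigmaCoeff E F G m n i j
      = E * ρ i * kd m n + F * kd i m * ρ n + G * kd i n * ρ m := by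
  simp only [sigmaCoeff, kd, mul_ite, mul_one, mul_zero, mul_add, sum_add_distrib, sum_ite_irrel,
    sum_ite_eq, mem_univ, ↓reduceIte, sum_const_zero, sum_ite_eq', ite_mul, zero_mul]
  split_ifs <;> ring

theorem sum_smul_Xmn (u : Fin d → Fin d → ℝ) (p : (Fin d → ℝ) × (Fin d → ℝ)) :
    ∑ m, ∑ n, u n m • Xmn E F G m n p
      = (0, fun i => E * (∑ m, u m m) * p.1 i + F * ∑ n, u n i * p.1 n
          + G * ∑ m, u i m * p.1 m) := by
  ext i
  · simp [Xmn, Prod.fst_sum]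
  · simp only [Xmn, sum_mul_sigmaCoeff, kd, mul_ite, mul_one, mul_zero, ite_mul, zero_mul,
      Prod.smul_mk, smul_zero, Prod.snd_sum, Finset.sum_apply, Pi.smul_apply, smul_eq_mul, mul_add,
      sum_add_distrib, sum_ite_eq, mem_univ, ↓reduceIte, sum_ite_irrel, sum_const_zero, mul_sum,
      sum_mul]
    simp only [← sum_add_distrib]
    exact sum_congr rfl fun _ _ => by ring

theorem sum_smul_Xmn_rankTwo (c a b : ℝ) (ρ φ χ : Fin d → ℝ) :
    ∑ m, ∑ n, (c * (a * ρ n * ρ m + b * ρ n * φ m)) • Xmn E F G m n (ρ, χ)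
      = (0, c • (((E + F + G) * a * ∑ j, ρ j ^ 2 + (E + G) * b * ∑ j, ρ j * φ j) • ρ
          + (F * b * ∑ j, ρ j ^ 2) • φ)) := by
  rw [sum_smul_Xmn]
  ext i
  · rfl
  · simp only [Pi.smul_apply, Pi.add_apply, smul_eq_mul, mul_add, add_mul, sum_add_distrib,
      mul_sum, sum_mul]
    simp only [← sum_add_distrib]
    exact sum_congr rfl fun _ _ => by ring

theorem sum_smul_Xmn_eq_of_coeffs (c a b : ℝ) (ρ φ χ : Fin d → ℝ)
    (hρ : (E + F + G) * a * ∑ j, ρ j ^ 2 + (E + G) * b * ∑ j, ρ j * φ j = 0)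
    (hφ : F * b * ∑ j, ρ j ^ 2 = 1) :
    ∑ m, ∑ n, (c * (a * ρ n * ρ m + b * ρ n * φ m)) • Xmn E F G m n (ρ, χ) = (0, c • φ) := by
  rw [sum_smul_Xmn_rankTwo, hρ, hφ, zero_smul, zero_add, one_smul]

end

theorem explicit_coeffs_spec {E F G : ℝ} (hF : F ≠ 0) (hEFG : E + F + G ≠ 0) {r s a b : ℝ}
    (hr : r ≠ 0)
    (ha : a = -((E + G) / ((E + F + G) * F)) * s / r ^ 2) (hb : b = 1 / (F * r)) :
    (E + F + G) * a * r + (E + G) * b * s = 0 ∧ F * b * r = 1 := by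
  subst ha hb
  exact ⟨by field_simp; ring, by field_simp⟩

theorem sum_sq_ne_zero_of_ne_zero {ι : Type*} [Fintype ι] {ρ : ι → ℝ} (hρ : ρ ≠ 0) :
    ∑ j, ρ j ^ 2 ≠ 0 := by
  simpa [dotProduct, sq] using dotProduct_self_eq_zero.not.mpr hρ

theorem explicit_control_solves_general (d : ℕ) (τ : ℝ) (hτ : 0 < τ)
    (E F G : ℝ) (hF : 0 < F) (hEFG : 0 < E + F + G)
    (T : ℝ)
    (ρ ρ' ρ'' : ℝ → Fin d → ℝ)
    (hρ' : ∀ t, HasDerivAt ρ (ρ' t) t)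
    (hρ'' : ∀ t, HasDerivAt ρ' (ρ'' t) t)
    (hρ0 : ∀ t ∈ Set.Icc (0 : ℝ) T, ρ t ≠ 0)
    (χ φ : ℝ → Fin d → ℝ)
    (hχ : ∀ t, χ t = τ • ρ' t)
    (hφ : ∀ t, φ t = τ • (τ • ρ'' t) + χ t)
    (α β : ℝ → ℝ)
    (hα : ∀ t, α t = -((E + G) / ((E + F + G) * F)) *
      (∑ j, ρ t j * φ t j) / (∑ j, ρ t j ^ 2) ^ 2)
    (hβ : ∀ t, β t = 1 / (F * ∑ j, ρ t j ^ 2))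
    (u : ℝ → Fin d → Fin d → ℝ)
    (hu : ∀ t n m, u t n m = (1 / τ) * (α t * ρ t n * ρ t m + β t * ρ t n * φ t m)) :
    ∀ t ∈ Set.Icc (0 : ℝ) T,
      HasDerivAt (fun s => (ρ s, χ s))
        (X0 τ (ρ t, χ t) + ∑ m, ∑ n, u t n m • Xmn E F G m n (ρ t, χ t)) t := by
  intro t ht
  obtain ⟨hρφ, hφ'⟩ := explicit_coeffs_spec hF.ne' hEFG.ne'
    (sum_sq_ne_zero_of_ne_zero (hρ0 t ht)) (hα t) (hβ t)
  have hcontrol : ∑ m, ∑ n, u t n m • Xmn E F G m n (ρ t, χ t) = (0, (1 / τ) • φ t) := by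
    simp only [hu]
    exact sum_smul_Xmn_eq_of_coeffs E F G _ _ _ _ _ _ hρφ hφ'
  have hvelocity : X0 τ (ρ t, χ t) + (0, (1 / τ) • φ t) = (ρ' t, τ • ρ'' t) := by
    ext i <;> simp [X0, hχ, hφ, hτ.ne']
  rw [hcontrol, hvelocity]
  obtain rfl : χ = fun s => τ • ρ' s := funext hχ
  exact (hρ' t).prodMk ((hρ'' t).const_smul τ)

/-- the explicit control `u^n_m = (1/τ)(α ρ^n ρ^m + β ρ^n φ^m)`
makes `p(t) = (ρ(t), τ ρ̇(t))` a solution of `ṗ = X₀(p) + Σ u^n_m X^m_n(p)`,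
for any smooth nowhere vanishing curve `ρ`. -/
theorem explicit_control_solves (d : ℕ) (hd : 1 ≤ d) (τ : ℝ) (hτ : 0 < τ)
    (E F G : ℝ) (hF : 0 < F) (hEFG : 0 < E + F + G)
    (T : ℝ) (hT : 0 < T)
    (ρ ρ' ρ'' : ℝ → Fin d → ℝ)
    (hρ' : ∀ t, HasDerivAt ρ (ρ' t) t)
    (hρ'' : ∀ t, HasDerivAt ρ' (ρ'' t) t)
    (hρ0 : ∀ t ∈ Set.Icc (0 : ℝ) T, ρ t ≠ 0)
    (χ φ : ℝ → Fin d → ℝ)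
    (hχ : ∀ t, χ t = τ • ρ' t)
    (hφ : ∀ t, φ t = τ • (τ • ρ'' t) + χ t)
    (α β : ℝ → ℝ)
    (hα : ∀ t, α t = -((E + G) / ((E + F + G) * F)) *
      (∑ j, ρ t j * φ t j) / (∑ j, ρ t j ^ 2) ^ 2)
    (hβ : ∀ t, β t = 1 / (F * ∑ j, ρ t j ^ 2))
    (u : ℝ → Fin d → Fin d → ℝ)
    (hu : ∀ t n m, u t n m = (1 / τ) * (α t * ρ t n * ρ t m + β t * ρ t n * φ t m)) :
    ∀ t ∈ Set.Icc (0 : ℝ) T,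
      HasDerivAt (fun s => (ρ s, χ s))
        (X0 τ (ρ t, χ t) + ∑ m, ∑ n, u t n m • Xmn E F G m n (ρ t, χ t)) t :=
  explicit_control_solves_general d τ hτ E F G hF hEFG T ρ ρ' ρ'' hρ' hρ'' hρ0 χ φ hχ hφ α β hα hβ u
    hu
end
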